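/- Let M, N ≥ 1 and let W₁A, W₁B ∈ ℂ^{M×N} be the per-polarization excitation matrices of a dual-polarized uniform rectangular protoarray. Define the companion matrices W₂A = −J_M · conj(W₁B) · J_N and W₂B = J_M · conj(W₁A) · J_N, and the horizontally expanded matrices WA = [W₁A , W₂A] ∈ ℂ^{M×2N}, WB = [W₁B , W₂B] ∈ ℂ^{M×2N} obtained by appending the companion to the right of the protoarray (column index n of the companion block corresponds to overall column N+n). Then for all ψy, ψz ∈ ℝ: |∑_{m<M, n<2N} (WA)_{m,n} e^{i(nψy+mψz)}|² + |∑_{m<M, n<2N} (WB)_{m,n} e^{i(nψy+mψz)}|² = 2·(|∑_{m<M, n<N} (W₁A)_{m,n} e^{i(nψy+mψz)}|² + |∑_{m<M, n<N} (W₁B)_{m,n} e^{i(nψy+mψz)}|²). -/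

import Mathlib

/-! Writing `F` for the field, appending a block shifts its phase by `e^{iNψy}`, and the
flipped conjugate block radiates `e^{i((N-1)ψy+(M-1)ψz)} · conj F`. Hence, with `a = F(W₁A)`,
`b = F(W₁B)` and a unimodular `c`, the expanded fields are `a - c·conj b` and `b + c·conj a`,
whose cross terms cancel in the sum of squared moduli. -/

open Finset

/-- `(m,n)` entry of the steering matrix of an `M×N` uniform rectangular array:
`exp(i(n ψy + m ψz))`. -/
noncomputable def steerM (M N : ℕ) (ψy ψz : ℝ) : Fin M → Fin N → ℂ :=
  fun m n => Complex.exp (Complex.I * (((n : ℕ) : ℂ) * (ψy : ℂ) + ((m : ℕ) : ℂ) * (ψz : ℂ)))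

/-- Radiated far field of an `M×N` array with excitation `W`:
`F(W) = ∑_{m,n} W m n · exp(i(n ψy + m ψz))`. -/
noncomputable def fieldF {M N : ℕ} (W : Fin M → Fin N → ℂ) (ψy ψz : ℝ) : ℂ :=
  ∑ m, ∑ n, W m n * steerM M N ψy ψz m n

open ComplexConjugate

theorem norm_sub_mul_conj_sq_add_norm_add_mul_conj_sq (a b c : ℂ) (hc : ‖c‖ = 1) :
    ‖a - c * conj b‖ ^ 2 + ‖b + c * conj a‖ ^ 2 = 2 * (‖a‖ ^ 2 + ‖b‖ ^ 2) := by
  have hc' : c.re * c.re + c.im * c.im = 1 := by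
    rw [← Complex.normSq_apply, ← Complex.sq_norm, hc, one_pow]
  simp only [Complex.sq_norm, Complex.normSq_apply, Complex.sub_re, Complex.sub_im,
    Complex.add_re, Complex.add_im, Complex.mul_re, Complex.mul_im,
    Complex.conj_re, Complex.conj_im]
  linear_combination (a.re * a.re + a.im * a.im + b.re * b.re + b.im * b.im) * hc'

section Array

variable {M N : ℕ} (ψy ψz : ℝ)

theorem steerM_castAdd (m : Fin M) (n : Fin N) :
    steerM M (N + N) ψy ψz m (Fin.castAdd N n) = steerM M N ψy ψz m n := rfl

theorem steerM_natAdd (m : Fin M) (n : Fin N) :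
    steerM M (N + N) ψy ψz m (Fin.natAdd N n)
      = Complex.exp (↑(N * ψy) * Complex.I) * steerM M N ψy ψz m n := by
  unfold steerM
  rw [← Complex.exp_add]
  congr 1
  push_cast [Fin.natAdd]
  ring

theorem steerM_rev (m : Fin M) (n : Fin N) :
    steerM M N ψy ψz m.rev n.rev
      = Complex.exp (↑(((N : ℝ) - 1) * ψy + ((M : ℝ) - 1) * ψz) * Complex.I)
        * conj (steerM M N ψy ψz m n) := by
  unfold steerM
  rw [← Complex.exp_conj, ← Complex.exp_add]
  congr 1
  simp only [Fin.val_rev, Nat.cast_sub m.2, Nat.cast_sub n.2, map_mul, map_add, Complex.conj_I,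
    Complex.conj_ofReal, map_natCast]
  push_cast
  ring

theorem fieldF_append (W₁ W₂ : Fin M → Fin N → ℂ) :
    fieldF (fun m => Fin.append (fun j => W₁ m j) (fun j => W₂ m j)) ψy ψz
      = fieldF W₁ ψy ψz + Complex.exp (↑(N * ψy) * Complex.I) * fieldF W₂ ψy ψz := by
  simp only [fieldF, Fin.sum_univ_add, Fin.append_left, Fin.append_right, steerM_castAdd,
    steerM_natAdd, sum_add_distrib, mul_sum]
  congr 1
  refine sum_congr rfl fun m _ => sum_congr rfl fun n _ => ?_
  ring

theorem fieldF_neg (V : Fin M → Fin N → ℂ) :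
    fieldF (fun m n => -V m n) ψy ψz = -fieldF V ψy ψz := by
  simp only [fieldF, neg_mul, sum_neg_distrib]

theorem fieldF_conj_rev (V : Fin M → Fin N → ℂ) :
    fieldF (fun m n => conj (V m.rev n.rev)) ψy ψz
      = Complex.exp (↑(((N : ℝ) - 1) * ψy + ((M : ℝ) - 1) * ψz) * Complex.I)
        * conj (fieldF V ψy ψz) := by
  have hrev (m : Fin M) (n : Fin N) : steerM M N ψy ψz m n
      = Complex.exp (↑(((N : ℝ) - 1) * ψy + ((M : ℝ) - 1) * ψz) * Complex.I)
        * conj (steerM M N ψy ψz m.rev n.rev) := by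
    simpa only [Fin.rev_rev] using steerM_rev ψy ψz m.rev n.rev
  -- reindexing both sums by `Fin.rev` moves the flip from `V` onto the steering matrix
  rw [fieldF, ← Equiv.sum_comp Fin.revPerm]
  simp only [Fin.revPerm_apply, fieldF, map_sum, mul_sum]
  refine sum_congr rfl fun m _ => ?_
  rw [← Equiv.sum_comp Fin.revPerm]
  refine sum_congr rfl fun n _ => ?_
  simp only [Fin.revPerm_apply, Fin.rev_rev, hrev m.rev n.rev, map_mul]
  ring

end Array

theorem asi_ura_horizontal_expansion_preserves_pattern_general
    (M N : ℕ)
    (W1A W1B : Fin M → Fin N → ℂ)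
    (W2A W2B : Fin M → Fin N → ℂ)
    (h2A : W2A = fun m n => -(starRingEnd ℂ) (W1B m.rev n.rev))
    (h2B : W2B = fun m n => (starRingEnd ℂ) (W1A m.rev n.rev))
    (WA WB : Fin M → Fin (N + N) → ℂ)
    (hA : WA = fun m => Fin.append (fun j => W1A m j) (fun j => W2A m j))
    (hB : WB = fun m => Fin.append (fun j => W1B m j) (fun j => W2B m j))
    (ψy ψz : ℝ) :
    ‖fieldF WA ψy ψz‖ ^ 2 + ‖fieldF WB ψy ψz‖ ^ 2
      = 2 * (‖fieldF W1A ψy ψz‖ ^ 2 + ‖fieldF W1B ψy ψz‖ ^ 2) := by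
  set c : ℂ := Complex.exp (↑(N * ψy) * Complex.I)
    * Complex.exp (↑(((N : ℝ) - 1) * ψy + ((M : ℝ) - 1) * ψz) * Complex.I)
  have hc : ‖c‖ = 1 := by
    rw [norm_mul, Complex.norm_exp_ofReal_mul_I, Complex.norm_exp_ofReal_mul_I, one_mul]
  have hFA : fieldF WA ψy ψz = fieldF W1A ψy ψz - c * conj (fieldF W1B ψy ψz) := by
    rw [hA, fieldF_append, h2A, fieldF_neg, fieldF_conj_rev]
    ring
  have hFB : fieldF WB ψy ψz = fieldF W1B ψy ψz + c * conj (fieldF W1A ψy ψz) := by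
    rw [hB, fieldF_append, h2B, fieldF_conj_rev]
    ring
  rw [hFA, hFB]
  exact norm_sub_mul_conj_sq_add_norm_add_mul_conj_sq _ _ _ hc

theorem asi_ura_horizontal_expansion_preserves_pattern
    (M N : ℕ) (hM : 1 ≤ M) (hN : 1 ≤ N)
    (W1A W1B : Fin M → Fin N → ℂ)
    (W2A W2B : Fin M → Fin N → ℂ)
    (h2A : W2A = fun m n => -(starRingEnd ℂ) (W1B m.rev n.rev))
    (h2B : W2B = fun m n => (starRingEnd ℂ) (W1A m.rev n.rev))
    (WA WB : Fin M → Fin (N + N) → ℂ)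
    (hA : WA = fun m => Fin.append (fun j => W1A m j) (fun j => W2A m j))
    (hB : WB = fun m => Fin.append (fun j => W1B m j) (fun j => W2B m j))
    (ψy ψz : ℝ) :
    ‖fieldF WA ψy ψz‖ ^ 2 + ‖fieldF WB ψy ψz‖ ^ 2
      = 2 * (‖fieldF W1A ψy ψz‖ ^ 2 + ‖fieldF W1B ψy ψz‖ ^ 2) :=
  asi_ura_horizontal_expansion_preserves_pattern_general M N W1A W1B W2A W2B h2A h2B WA WB hA hB ψy
    ψz
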